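/- arXiv:1307.5188 — 2 statements merged into one kernel-verified Lean document; each statement's English description precedes it below -/
import Mathlib

section
/- For every integer k and every integer n ≥ 1, the n-th poly-Cauchy number of the first kind satisfies C_n^(k) = Σ_{l=0}^{n-1} Σ_{l_1+⋯+l_n=l} ( (n-1)! / (l_1!⋯l_n!(n-1-l)!) ) · B_{l_1}⋯B_{l_n} / (n-l+1)^k, where the inner sum ranges over n-tuples of nonnegative integers l_1,…,l_n summing to l. -/
open PowerSeries Finset

/-- Composition `F(G(t))` of formal power series (intended for `G` with zero
constant term, in which case `coeff n (G ^ m) = 0` for `m > n` and the finite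
sum below computes the usual composition). -/
noncomputable def psComp (F G : PowerSeries ℝ) : PowerSeries ℝ :=
  PowerSeries.mk fun n => ∑ m ∈ Finset.range (n + 1),
    (PowerSeries.coeff m F) * (PowerSeries.coeff n (G ^ m))

/-- The formal power series of `log (1 + t)`. -/
noncomputable def logSeries : PowerSeries ℝ :=
  PowerSeries.mk fun n => if n = 0 then 0 else (-1) ^ (n + 1) / n

/-- The polylogarithm factorial function `Lif_k(t) = ∑_{m ≥ 0} t^m / (m! (m+1)^k)`. -/
noncomputable def Lif (k : ℤ) : PowerSeries ℝ :=
  PowerSeries.mk fun m => 1 / ((m.factorial : ℝ) * ((m : ℝ) + 1) ^ k)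

/-- The poly-Cauchy polynomial of the first kind `C_n^{(k)}(x)`, defined by
`Lif_k(log(1+t)) / (1+t)^x = ∑_{n ≥ 0} C_n^{(k)}(x) t^n / n!`, where
`(1+t)^{-x} = exp (-x · log (1+t))`. -/
noncomputable def polyCauchy (k : ℤ) (n : ℕ) (x : ℝ) : ℝ :=
  (n.factorial : ℝ) * PowerSeries.coeff n
    (psComp (Lif k) logSeries *
      psComp (PowerSeries.rescale (-x) (PowerSeries.exp ℝ)) logSeries)

/-- The (signed) Stirling numbers of the first kind `S₁(l, m)`, defined by
`(log (1+t))^m = m! ∑_{l ≥ m} S₁(l,m) t^l / l!`. -/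
noncomputable def S1 (l m : ℕ) : ℝ :=
  (l.factorial : ℝ) / (m.factorial : ℝ) * PowerSeries.coeff l (logSeries ^ m)

/-- The ordinary Bernoulli numbers, via `t/(e^t - 1) = ∑ B_n t^n/n!`;
here `(mk fun m => 1/(m+1)!)` is the series `(e^t - 1)/t`. -/
noncomputable def Bern (n : ℕ) : ℝ :=
  (n.factorial : ℝ) * PowerSeries.coeff n
    (PowerSeries.mk fun m => (1 : ℝ) / (m + 1).factorial)⁻¹

/-- The Bernoulli polynomial of order `r`, via `(t/(e^t-1))^r e^{xt} = ∑ B_n^{(r)}(x) t^n/n!`. -/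
noncomputable def bernPoly (r : ℕ) (n : ℕ) (x : ℝ) : ℝ :=
  (n.factorial : ℝ) * PowerSeries.coeff n
    (((PowerSeries.mk fun m => (1 : ℝ) / (m + 1).factorial)⁻¹) ^ r *
      PowerSeries.rescale x (PowerSeries.exp ℝ))

/-- The series `log(1+t)/t`, so that `t / log(1+t) = Dlog⁻¹`. -/
noncomputable def Dlog : PowerSeries ℝ :=
  PowerSeries.mk fun n => (-1) ^ n / ((n : ℝ) + 1)

/-- The Cauchy numbers of the first kind, via `t/log(1+t) = ∑ C_n t^n/n!`. -/
noncomputable def cauchyNum (n : ℕ) : ℝ :=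
  (n.factorial : ℝ) * PowerSeries.coeff n Dlog⁻¹

/-- The numbers `T_n^{(r,k)}`, via
`(t/log(1+t))^r · Lif_k(log(1+t)) = ∑ T_n^{(r,k)} t^n/n!`. -/
noncomputable def T (r : ℕ) (k : ℤ) (n : ℕ) : ℝ :=
  (n.factorial : ℝ) * PowerSeries.coeff n (Dlog⁻¹ ^ r * psComp (Lif k) logSeries)

/-- The rising factorial `x^{(m)} = x (x+1) ⋯ (x+m-1)`. -/
noncomputable def risingFactorial (x : ℝ) (m : ℕ) : ℝ :=
  ∏ i ∈ Finset.range m, (x + i)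

/-- Carlitz's polynomials `β_n^{(r)}(x)`, via `(t/log(1+t))^r (1+t)^x = ∑ β_n^{(r)}(x) t^n/n!`,
where `(1+t)^x = exp (x log (1+t))`. -/
noncomputable def carlitz (r : ℕ) (n : ℕ) (x : ℝ) : ℝ :=
  (n.factorial : ℝ) * PowerSeries.coeff n
    (Dlog⁻¹ ^ r * psComp (PowerSeries.rescale x (PowerSeries.exp ℝ)) logSeries)

/-!
Expanding `Lif_k (log (1 + t))` gives `C_n^(k) = n! ∑_m [t^n] L^m / (m! (m+1)^k)` with
`L = log (1 + t)`. As `L` is the compositional inverse of `e^t - 1`, Lagrange inversion gives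
`n [t^n] L^m = m [t^(n-m)] B^n` for `B = t / (e^t - 1) = ∑ B_j t^j / j!`, and the coefficients of
`B^n` are the multinomial sums of products of Bernoulli numbers. The Lagrange identity is proved
by induction on `m` and `n - m`, from the coefficient recurrences that the differential equations
`(1 + t) L' = 1` and `t B' = B - t B - B^2` impose on the powers of `L` and of `B`.
-/

namespace PowerSeries

theorem coeff_pow_eq_sum_antidiagonalTuple {R : Type*} [CommSemiring R] (φ : R⟦X⟧) (n l : ℕ) :
    coeff l (φ ^ n) = ∑ f ∈ Nat.antidiagonalTuple n l, ∏ i, coeff (f i) φ := by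
  classical
  rw [← Fin.prod_const, coeff_prod]
  exact Finset.sum_equiv Finsupp.equivFunOnFinite
    (fun g => by simp [Nat.mem_antidiagonalTuple]) (fun g _ => rfl)

theorem coeff_X_mul_derivative {R : Type*} [CommSemiring R] (φ : R⟦X⟧) (n : ℕ) :
    coeff n (X * d⁄dX R φ) = n * coeff n φ := by
  cases n with
  | zero => simp
  | succ n => rw [coeff_succ_X_mul, coeff_derivative, mul_comm]; push_cast; rfl

end PowerSeries

theorem psComp_one (G : PowerSeries ℝ) : psComp 1 G = 1 := by
  ext n
  rw [psComp, coeff_mk, sum_eq_single 0 (fun m _ hm => by simp [coeff_one, hm]) (by simp)]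
  simp

noncomputable def expSubOneDivX : PowerSeries ℝ := mk fun m => (1 : ℝ) / (m + 1).factorial

noncomputable def bernoulliSeries : PowerSeries ℝ := expSubOneDivX⁻¹

theorem Bern_eq_factorial_mul_coeff (n : ℕ) :
    Bern n = n.factorial * coeff n bernoulliSeries := rfl

theorem X_mul_expSubOneDivX : X * expSubOneDivX = exp ℝ - 1 := by
  ext (_ | n)
  · simp [expSubOneDivX]
  · simp [coeff_succ_X_mul, expSubOneDivX, coeff_exp]

theorem X_mul_derivative_expSubOneDivX :
    X * d⁄dX ℝ expSubOneDivX = exp ℝ - expSubOneDivX := by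
  have h := congrArg (d⁄dX ℝ) X_mul_expSubOneDivX
  rw [Derivation.leibniz, map_sub, derivative_exp ℝ, Derivation.map_one_eq_zero, derivative_X,
    smul_eq_mul, smul_eq_mul, mul_one, sub_zero] at h
  linear_combination h

theorem constantCoeff_expSubOneDivX : constantCoeff expSubOneDivX = 1 := by
  simp [expSubOneDivX, ← coeff_zero_eq_constantCoeff_apply]

theorem bernoulliSeries_mul_expSubOneDivX : bernoulliSeries * expSubOneDivX = 1 :=
  PowerSeries.inv_mul_cancel _ (by simp [constantCoeff_expSubOneDivX])

theorem constantCoeff_bernoulliSeries : constantCoeff bernoulliSeries = 1 := by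
  simp [bernoulliSeries, constantCoeff_expSubOneDivX]

theorem X_mul_derivative_bernoulliSeries :
    X * d⁄dX ℝ bernoulliSeries = bernoulliSeries - X * bernoulliSeries - bernoulliSeries ^ 2 := by
  rw [bernoulliSeries, derivative_inv', ← bernoulliSeries]
  linear_combination (-bernoulliSeries ^ 2) * X_mul_derivative_expSubOneDivX
    + bernoulliSeries ^ 2 * X_mul_expSubOneDivX
    + (bernoulliSeries - X * bernoulliSeries) * bernoulliSeries_mul_expSubOneDivX

theorem coeff_succ_bernoulliSeries_pow_succ (m j : ℕ) :
    ((j : ℝ) + 1) * coeff (j + 1) (bernoulliSeries ^ (m + 1)) =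
      ((m : ℝ) + 1) * (coeff (j + 1) (bernoulliSeries ^ (m + 1))
        - coeff j (bernoulliSeries ^ (m + 1)) - coeff (j + 1) (bernoulliSeries ^ (m + 2))) := by
  have h : X * d⁄dX ℝ (bernoulliSeries ^ (m + 1)) = C ((m : ℝ) + 1) *
      (bernoulliSeries ^ (m + 1) - X * bernoulliSeries ^ (m + 1) - bernoulliSeries ^ (m + 2)) := by
    rw [derivative_pow, Nat.add_sub_cancel, map_add, map_one, map_natCast]
    push_cast
    linear_combination ((m : ℝ⟦X⟧) + 1) * bernoulliSeries ^ m * X_mul_derivative_bernoulliSeries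
  have := congrArg (coeff (j + 1)) h
  rw [coeff_X_mul_derivative, coeff_C_mul, map_sub, map_sub, coeff_succ_X_mul] at this
  exact_mod_cast this

theorem logSeries_eq_X_mul_Dlog : logSeries = X * Dlog := by
  ext (_ | n)
  · simp [logSeries]
  · rw [coeff_succ_X_mul]
    simp [logSeries, Dlog, pow_succ]

theorem one_add_X_mul_derivative_logSeries : (1 + X) * d⁄dX ℝ logSeries = 1 := by
  ext n
  rw [add_mul, one_mul, map_add, coeff_X_mul_derivative, coeff_derivative]
  cases n with
  | zero => simp [logSeries]
  | succ n =>
    simp only [logSeries, coeff_mk, coeff_one]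
    push_cast
    field_simp
    ring

theorem coeff_succ_logSeries_pow_succ (n m : ℕ) :
    ((n : ℝ) + 1) * coeff (n + 1) (logSeries ^ (m + 1)) + n * coeff n (logSeries ^ (m + 1)) =
      ((m : ℝ) + 1) * coeff n (logSeries ^ m) := by
  have h : (1 + X) * d⁄dX ℝ (logSeries ^ (m + 1)) = C ((m : ℝ) + 1) * logSeries ^ m := by
    rw [derivative_pow, Nat.add_sub_cancel, map_add, map_one, map_natCast]
    push_cast
    linear_combination ((m : ℝ⟦X⟧) + 1) * logSeries ^ m * one_add_X_mul_derivative_logSeries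
  have := congrArg (coeff n) h
  rwa [add_mul, one_mul, map_add, coeff_X_mul_derivative, coeff_derivative, coeff_C_mul,
    mul_comm (coeff (n + 1) _)] at this

theorem coeff_zero_bernoulliSeries_pow (n : ℕ) : coeff 0 (bernoulliSeries ^ n) = 1 := by
  simp [constantCoeff_bernoulliSeries]

theorem coeff_logSeries_pow_self (n : ℕ) : coeff n (logSeries ^ n) = 1 := by
  have : constantCoeff Dlog = 1 := by simp [Dlog, ← coeff_zero_eq_constantCoeff_apply]
  simpa [logSeries_eq_X_mul_Dlog, mul_pow, this] using coeff_X_pow_mul (Dlog ^ n) n 0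

theorem add_mul_coeff_logSeries_pow (m j : ℕ) :
    ((m : ℝ) + j) * coeff (m + j) (logSeries ^ m) = m * coeff j (bernoulliSeries ^ (m + j)) := by
  induction j generalizing m with
  | zero => simp [coeff_logSeries_pow_self, coeff_zero_bernoulliSeries_pow]
  | succ j ihj =>
    induction m with
    | zero => simp [coeff_one]
    | succ m ihm =>
      have hA := coeff_succ_logSeries_pow_succ (m + j + 1) m
      have hC := coeff_succ_bernoulliSeries_pow_succ (m + j) j
      have ihj' := ihj (m + 1)
      rw [show m + j + 2 = m + j + 1 + 1 by omega] at hC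
      rw [show m + (j + 1) = m + j + 1 by omega] at ihm
      rw [show m + 1 + j = m + j + 1 by omega] at ihj'
      rw [show m + 1 + (j + 1) = m + j + 1 + 1 by omega]
      have hN : (m : ℝ) + j + 1 ≠ 0 := by positivity
      apply mul_left_cancel₀ hN
      push_cast at *
      linear_combination ((m : ℝ) + j + 1) * hA - ((m : ℝ) + j + 1) * ihj' + ((m : ℝ) + 1) * ihm
        - ((m : ℝ) + 1) * hC

theorem polyCauchy_zero_eq_sum (k : ℤ) (n : ℕ) :
    polyCauchy k n 0 = n.factorial *
      ∑ m ∈ range (n + 1), coeff n (logSeries ^ m) / (m.factorial * ((m : ℝ) + 1) ^ k) := by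
  rw [polyCauchy, neg_zero, rescale_zero_apply, constantCoeff_exp, map_one, psComp_one, mul_one,
    psComp, coeff_mk]
  simp only [Lif, coeff_mk, one_div_mul_eq_div]

theorem sum_antidiagonalTuple_prod_Bern_div (n l : ℕ) :
    ∑ f ∈ Nat.antidiagonalTuple n l, (∏ i, Bern (f i)) / ∏ i, ((f i).factorial : ℝ) =
      coeff l (bernoulliSeries ^ n) := by
  rw [coeff_pow_eq_sum_antidiagonalTuple]
  refine sum_congr rfl fun f _ => ?_
  rw [← prod_div_distrib]
  refine prod_congr rfl fun i _ => ?_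
  rw [Bern_eq_factorial_mul_coeff, mul_div_cancel_left₀ _ (by positivity)]

theorem factorial_div_mul_coeff_logSeries_pow (m j : ℕ) :
    ((m + j + 1).factorial : ℝ) / (m + 1).factorial * coeff (m + j + 1) (logSeries ^ (m + 1)) =
      (m + j).factorial / m.factorial * coeff j (bernoulliSeries ^ (m + j + 1)) := by
  have h := add_mul_coeff_logSeries_pow (m + 1) j
  rw [show m + 1 + j = m + j + 1 by omega] at h
  rw [Nat.factorial_succ (m + j), Nat.factorial_succ m]
  push_cast at h ⊢
  field_simp
  linear_combination h

theorem factorial_mul_coeff_logSeries_pow_div (k : ℤ) (m j : ℕ) :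
    ((m + j + 1).factorial : ℝ) * (coeff (m + j + 1) (logSeries ^ (m + 1)) /
        ((m + 1).factorial * (((m + 1 : ℕ) : ℝ) + 1) ^ k)) =
      (m + j).factorial / (m.factorial * (((m + j + 1 : ℕ) : ℝ) - j + 1) ^ k) *
        coeff j (bernoulliSeries ^ (m + j + 1)) := by
  have hbase : ((m + j + 1 : ℕ) : ℝ) - j + 1 = ((m + 1 : ℕ) : ℝ) + 1 := by push_cast; ring
  calc _ = ((m + j + 1).factorial : ℝ) / (m + 1).factorial * coeff (m + j + 1) (logSeries ^ (m + 1))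
          / (((m + 1 : ℕ) : ℝ) + 1) ^ k := by ring
    _ = (m + j).factorial / m.factorial * coeff j (bernoulliSeries ^ (m + j + 1))
          / (((m + 1 : ℕ) : ℝ) + 1) ^ k := by rw [factorial_div_mul_coeff_logSeries_pow]
    _ = _ := by rw [hbase]; ring

/-- part of Theorem 2 of the paper. -/
theorem polyCauchyNumber_eq_bernoulli_multinomial_sum (k : ℤ) (n : ℕ) (hn : 1 ≤ n) :
    polyCauchy k n 0 =
      ∑ l ∈ Finset.range n, ∑ f ∈ Finset.Nat.antidiagonalTuple n l,
        ((n - 1).factorial : ℝ) /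
            ((∏ i, ((f i).factorial : ℝ)) * ((n - 1 - l).factorial : ℝ)) *
          (∏ i, Bern (f i)) / ((n : ℝ) - l + 1) ^ k := by
  obtain ⟨N, rfl⟩ := Nat.exists_eq_add_of_le' hn
  have hinner (l : ℕ) : ∑ f ∈ Nat.antidiagonalTuple (N + 1) l,
      (N.factorial : ℝ) / ((∏ i, ((f i).factorial : ℝ)) * ((N - l).factorial : ℝ)) *
        (∏ i, Bern (f i)) / (((N + 1 : ℕ) : ℝ) - l + 1) ^ k =
      N.factorial / ((N - l).factorial * (((N + 1 : ℕ) : ℝ) - l + 1) ^ k) *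
        coeff l (bernoulliSeries ^ (N + 1)) := by
    rw [← sum_antidiagonalTuple_prod_Bern_div, mul_sum]
    exact sum_congr rfl fun f _ => by ring
  rw [polyCauchy_zero_eq_sum, sum_range_succ', ← sum_range_reflect]
  simp only [Nat.add_sub_cancel, hinner]
  rw [pow_zero, coeff_one, if_neg N.succ_ne_zero, zero_div, add_zero, mul_sum]
  refine sum_congr rfl fun j hj => ?_
  obtain ⟨m, rfl⟩ := Nat.exists_eq_add_of_le' (mem_range_succ_iff.mp hj)
  simp only [Nat.add_sub_cancel]
  exact factorial_mul_coeff_logSeries_pow_div k m j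
end

section
/- For every integer k and every integer n ≥ 0, the poly-Cauchy polynomials of the first kind satisfy the recurrence C_{n+1}^(k)(x) = Σ_{l=0}^{n} S₁(n,l) Σ_{j=0}^{l} ( (-1)^j C(l,j) / (l-j+2)^k ) (x+1)^j − x · C_n^(k)(x+1). -/
open PowerSeries Finset

/-!
Write the generating function as `G_x = (Lif_k(s) e^{-xs})` evaluated at `s = log(1+t)`, with
`(1+t)^{-x} = e^{-x log(1+t)}`. By the chain rule and `d log(1+t)/dt = 1/(1+t) = e^{-log(1+t)}`,
`G_x' = (Lif_k'(s) e^{-(x+1)s})(log(1+t)) - x G_{x+1}`. Comparing coefficients of `t^n`: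
substituting `log(1+t)` into an exponential generating function transforms its coefficients by
the Stirling numbers `S₁(n,l)`, and the `l`-th exponential coefficient of `Lif_k'(s) e^{-(x+1)s}`
is `∑_j C(l,j) (-(x+1))^j / (l-j+2)^k`.
-/

open Nat

namespace PowerSeries

section CommSemiring

variable {R : Type*} [CommSemiring R]

theorem derivative_rescale (a : R) (f : R⟦X⟧) :
    d⁄dX R (rescale a f) = C a * rescale a (d⁄dX R f) := by
  ext n
  simp only [coeff_derivative, coeff_rescale, coeff_C_mul, pow_succ]
  ring

theorem factorial_succ_mul_coeff_succ (f : R⟦X⟧) (n : ℕ) :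
    ((n + 1)! : R) * coeff (n + 1) f = n ! * coeff n (d⁄dX R f) := by
  rw [coeff_derivative, Nat.factorial_succ]
  push_cast
  ring

theorem factorial_mul_coeff_mul (f g : R⟦X⟧) (n : ℕ) :
    (n ! : R) * coeff n (f * g) = ∑ j ∈ range (n + 1),
      n.choose j * ((j ! * coeff j f) * ((n - j)! * coeff (n - j) g)) := by
  rw [coeff_mul, Nat.sum_antidiagonal_eq_sum_range_succ (fun i j => coeff i f * coeff j g),
    mul_sum]
  refine sum_congr rfl fun j hj => ?_
  rw [← Nat.choose_mul_factorial_mul_factorial (Nat.le_of_lt_succ (mem_range.mp hj))]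
  push_cast
  ring

theorem coeff_pow_eq_zero_of_lt {G : R⟦X⟧} (hG : constantCoeff G = 0) {n m : ℕ} (h : n < m) :
    coeff n (G ^ m) = 0 :=
  coeff_of_lt_order n ((Nat.cast_lt.mpr h).trans_le (le_order_pow_of_constantCoeff_eq_zero m hG))

end CommSemiring

theorem constantCoeff_subst_of_constantCoeff_eq_zero {R : Type*} [CommRing R] (F : R⟦X⟧)
    {G : R⟦X⟧} (hG : constantCoeff G = 0) : constantCoeff (F.subst G) = constantCoeff F := by
  rw [← coeff_zero_eq_constantCoeff_apply, coeff_subst' (HasSubst.of_constantCoeff_zero' hG),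
    finsum_eq_single _ 0 fun d hd => by
      rw [coeff_pow_eq_zero_of_lt hG (Nat.pos_of_ne_zero hd), smul_zero]]
  simp

section QAlgebra

variable {A : Type*} [CommRing A] [Algebra ℚ A]

theorem one_add_X_mul_derivative_log : (1 + X) * d⁄dX A (log A) = 1 := by
  ext n
  rw [deriv_log, add_mul, one_mul, map_add]
  cases n with
  | zero => simp
  | succ n => simp [coeff_succ_X_mul, pow_succ]

/-- Since `d/dX (log A) = (1 + X)⁻¹`, the product `exp(log(1 + X)) · (1 + X)⁻¹` has derivative
zero and constant term one. -/
theorem exp_subst_log [IsAddTorsionFree A] : (exp A).subst (log A) = 1 + X := by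
  obtain ⟨u, hu⟩ : IsUnit (1 + X : A⟦X⟧) := isUnit_iff_constantCoeff.mpr (by simp)
  have hlog : d⁄dX A (log A) = ↑u⁻¹ :=
    Units.eq_inv_of_mul_eq_one_left (hu ▸ one_add_X_mul_derivative_log)
  have hexp : d⁄dX A ((exp A).subst (log A)) = (exp A).subst (log A) * ↑u⁻¹ := by
    rw [derivative_subst HasSubst.log, derivative_exp, hlog]
  have hu' : d⁄dX A (u : A⟦X⟧) = 1 := by rw [hu, map_add, derivative_one, derivative_X, zero_add]
  rw [← hu, ← Units.mul_inv_eq_one]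
  refine derivative.ext ?_ ?_
  · rw [Derivation.leibniz, derivative_inv, hexp, hu', derivative_one]
    simp only [smul_eq_mul]
    ring
  · simpa [constantCoeff_subst_of_constantCoeff_eq_zero _ constantCoeff_log, hu]
      using congrArg constantCoeff u.inv_mul

theorem derivative_subst_log_mul_rescale_exp [IsAddTorsionFree A] (F : A⟦X⟧) (y : A) :
    d⁄dX A ((F * rescale y (exp A)).subst (log A)) =
      ((d⁄dX A F + y • F) * rescale (y - 1) (exp A)).subst (log A) := by
  have hsplit : rescale y (exp A) = rescale (y - 1) (exp A) * exp A := by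
    simpa [rescale_one] using (exp_mul_exp_eq_exp_add (y - 1) (1 : A)).symm
  have hD : d⁄dX A (F * rescale y (exp A)) =
      (d⁄dX A F + y • F) * rescale (y - 1) (exp A) * exp A := by
    rw [Derivation.leibniz, derivative_rescale, derivative_exp, hsplit, smul_eq_C_mul,
      smul_eq_mul, smul_eq_mul]
    ring
  rw [derivative_subst HasSubst.log, hD, subst_mul HasSubst.log, exp_subst_log, mul_assoc,
    one_add_X_mul_derivative_log, mul_one]

end QAlgebra

end PowerSeries

theorem logSeries_eq_log : logSeries = log ℝ := by
  ext n
  rcases n.eq_zero_or_pos with rfl | hn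
  · simp [logSeries]
  · simp [logSeries, hn.ne']

theorem psComp_eq_subst (F : ℝ⟦X⟧) {G : ℝ⟦X⟧} (hG : constantCoeff G = 0) :
    psComp F G = F.subst G := by
  ext n
  rw [coeff_subst' (HasSubst.of_constantCoeff_zero' hG), finsum_eq_sum_of_support_subset
    (s := range (n + 1)) _ fun d hd => ?_]
  · simp [psComp]
  · by_contra hdn
    exact hd (by simp only [coeff_pow_eq_zero_of_lt hG (by simpa using hdn), smul_zero])

theorem polyCauchy_eq_factorial_mul_coeff (k : ℤ) (n : ℕ) (x : ℝ) :
    polyCauchy k n x = n ! * coeff n ((Lif k * rescale (-x) (exp ℝ)).subst (log ℝ)) := by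
  rw [polyCauchy, logSeries_eq_log, psComp_eq_subst _ constantCoeff_log,
    psComp_eq_subst _ constantCoeff_log, subst_mul HasSubst.log]

theorem factorial_mul_coeff_subst_log (F : ℝ⟦X⟧) (n : ℕ) :
    n ! * coeff n (F.subst (log ℝ)) = ∑ l ∈ range (n + 1), S1 n l * (l ! * coeff l F) := by
  rw [← psComp_eq_subst _ constantCoeff_log, ← logSeries_eq_log, psComp, coeff_mk, mul_sum]
  refine sum_congr rfl fun l _ => ?_
  have : (l ! : ℝ) ≠ 0 := by positivity
  rw [S1]
  field_simp

theorem coeff_derivative_Lif (k : ℤ) (m : ℕ) :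
    coeff m (d⁄dX ℝ (Lif k)) = 1 / (m ! * ((m : ℝ) + 2) ^ k) := by
  have : ((m : ℝ) + 2) ^ k ≠ 0 := by positivity
  rw [coeff_derivative, Lif, coeff_mk, Nat.factorial_succ,
    show ((m + 1 : ℕ) : ℝ) + 1 = m + 2 by push_cast; ring]
  push_cast
  field_simp

theorem factorial_mul_coeff_rescale_exp_mul_derivative_Lif (k : ℤ) (c : ℝ) (l : ℕ) :
    l ! * coeff l (rescale c (exp ℝ) * d⁄dX ℝ (Lif k)) =
      ∑ j ∈ range (l + 1), (l.choose j / ((l : ℝ) - j + 2) ^ k) * c ^ j := by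
  rw [factorial_mul_coeff_mul]
  refine sum_congr rfl fun j hj => ?_
  have hjl : j ≤ l := Nat.le_of_lt_succ (mem_range.mp hj)
  have : (l : ℝ) - j + 2 ≠ 0 := by
    have : (j : ℝ) ≤ l := by exact_mod_cast hjl
    linarith
  rw [coeff_rescale, coeff_exp, coeff_derivative_Lif, Nat.cast_sub hjl]
  simp only [one_div, map_inv₀, map_natCast]
  field_simp

/-- Theorem 3 of the paper. -/
theorem polyCauchy_recurrence (k : ℤ) (n : ℕ) (x : ℝ) :
    polyCauchy k (n + 1) x =
      (∑ l ∈ Finset.range (n + 1), S1 n l *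
        ∑ j ∈ Finset.range (l + 1),
          ((-1 : ℝ) ^ j * (l.choose j : ℝ) / ((l : ℝ) - j + 2) ^ k) * (x + 1) ^ j) -
      x * polyCauchy k n (x + 1) := by
  have hterm (l : ℕ) : l ! * coeff l (rescale (-(x + 1)) (exp ℝ) * d⁄dX ℝ (Lif k)) =
      ∑ j ∈ range (l + 1), ((-1 : ℝ) ^ j * l.choose j / ((l : ℝ) - j + 2) ^ k) * (x + 1) ^ j := by
    rw [factorial_mul_coeff_rescale_exp_mul_derivative_Lif]
    refine sum_congr rfl fun j _ => ?_
    rw [neg_pow]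
    ring
  rw [polyCauchy_eq_factorial_mul_coeff, polyCauchy_eq_factorial_mul_coeff,
    factorial_succ_mul_coeff_succ, derivative_subst_log_mul_rescale_exp,
    show -x - 1 = -(x + 1) by ring, add_mul, smul_mul_assoc, subst_add HasSubst.log,
    subst_smul HasSubst.log, map_add, map_smul, mul_add, mul_comm (d⁄dX ℝ (Lif k)),
    factorial_mul_coeff_subst_log]
  simp only [hterm, smul_eq_mul]
  ring
end
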